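/- A finite group G is nilpotent if and only if it satisfies one of the following conditions: (1) for every maximal subgroup M of G, every Sylow subgroup of M is F*(G)-conjugate-permutable in G; (2) for every maximal subgroup M of G and every Sylow subgroup P of M, the normalizer N_M(P) is F*(G)-conjugate-permutable in G. -/

import Mathlib

open scoped Pointwise

section Defs

variable {G : Type*} [Group G]

/-- The conjugate `H^x = x⁻¹ H x` of a subgroup `H` of `G`. -/
def conjS (x : G) (H : Subgroup G) : Subgroup G :=
  H.map (MulAut.conj x⁻¹).toMonoidHom

/-- A subgroup `H` of `G` is `R`-conjugate-permutable (for a subset `R ⊆ G`) if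
`H · H^x = H^x · H` as subsets of `G`, for all `x ∈ R`. -/
def IsRCP (R : Set G) (H : Subgroup G) : Prop :=
  ∀ x ∈ R, (H : Set G) * (conjS x H : Set G) = (conjS x H : Set G) * (H : Set G)

/-- A subgroup `H` of `G` is conjugate-permutable if `H · H^x = H^x · H` for all `x ∈ G`. -/
def IsConjPermutable (H : Subgroup G) : Prop :=
  IsRCP (Set.univ : Set G) H

/-- `N` is a minimal normal subgroup of `G`. -/
def IsMinimalNormal (N : Subgroup G) : Prop :=
  N.Normal ∧ N ≠ ⊥ ∧ ∀ K : Subgroup G, K.Normal → K ≤ N → K = ⊥ ∨ K = N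

/-- `H` is an abnormal subgroup of `G`: `x ∈ ⟨H, H^x⟩` for all `x ∈ G`. -/
def IsAbnormal (H : Subgroup G) : Prop :=
  ∀ x : G, x ∈ H ⊔ conjS x H

/-- `H` is normal in the subgroup `K` of `G`. -/
def IsNormalIn (H K : Subgroup G) : Prop :=
  H ≤ K ∧ ∀ x ∈ K, ∀ h ∈ H, x * h * x⁻¹ ∈ H

/-- `H` is subnormal in the subgroup `K`: there is a chain
`H = H₀ ◁ H₁ ◁ ⋯ ◁ Hₙ = K` with each term normal in the next. -/
def IsSubnormalIn (H K : Subgroup G) : Prop :=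
  ∃ (n : ℕ) (s : Fin (n + 1) → Subgroup G),
    s 0 = H ∧ s (Fin.last n) = K ∧
    ∀ i : Fin n, s i.castSucc ≤ s i.succ ∧
      ∀ x ∈ s i.succ, ∀ h ∈ s i.castSucc, x * h * x⁻¹ ∈ s i.castSucc

/-- `H` is pronormal in the subgroup `K`: for every `x ∈ K`, the subgroups `H` and `H^x`
are conjugate in `⟨H, H^x⟩`. -/
def IsPronormalIn (H K : Subgroup G) : Prop :=
  H ≤ K ∧ ∀ x ∈ K, ∃ k ∈ H ⊔ conjS x H, conjS k H = conjS x H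

end Defs

/-- The socle of `G`: the subgroup generated by all minimal normal subgroups of `G`. -/
def socle' (G : Type*) [Group G] : Subgroup G :=
  sSup {N : Subgroup G | IsMinimalNormal N}

/-- `F̃(G)`: the subgroup of `G` containing the Frattini subgroup `Φ(G)` with
`F̃(G)/Φ(G) = Soc(G/Φ(G))`. -/
def Ftilde (G : Type*) [Group G] : Subgroup G :=
  (socle' (G ⧸ frattini G)).comap (QuotientGroup.mk' (frattini G))

/-- The Fitting subgroup `F(G)`: the largest normal nilpotent subgroup of `G`
(the subgroup generated by all normal nilpotent subgroups). -/
def Fitting (G : Type*) [Group G] : Subgroup G :=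
  sSup {N : Subgroup G | N.Normal ∧ Group.IsNilpotent N}

section FittingNormal

variable {G : Type*} [Group G]

lemma map_conj_eq_self {N : Subgroup G} (hN : N.Normal) (g : G) :
    N.map (MulAut.conj g).toMonoidHom = N := by
  ext x
  simp only [Subgroup.mem_map, MulEquiv.coe_toMonoidHom, MulAut.conj_apply]
  constructor
  · rintro ⟨n, hn, rfl⟩; exact hN.conj_mem n hn g
  · intro hx
    refine ⟨g⁻¹ * x * g, by simpa using hN.conj_mem x hx g⁻¹, by group⟩

instance Fitting_normal (G : Type*) [Group G] : (Fitting G).Normal := by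
  constructor
  intro n hn g
  have h1 : (Fitting G).map (MulAut.conj g).toMonoidHom = Fitting G := by
    unfold Fitting
    rw [sSup_eq_iSup, Subgroup.map_iSup]
    refine iSup_congr fun N => ?_
    rw [Subgroup.map_iSup]
    exact iSup_congr_Prop Iff.rfl fun hN => map_conj_eq_self hN.1 g
  rw [← h1]
  exact Subgroup.mem_map.2 ⟨n, hn, rfl⟩

end FittingNormal

/-- The generalized Fitting subgroup `F*(G)`: the subgroup containing `F(G)` with
`F*(G)/F(G) = Soc(C_G(F(G))·F(G)/F(G))`. -/
def FStar (G : Type*) [Group G] : Subgroup G :=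
  Subgroup.comap (QuotientGroup.mk' (Fitting G))
    (Subgroup.map
      ((Subgroup.centralizer (Fitting G : Set G) ⊔ Fitting G).map
          (QuotientGroup.mk' (Fitting G))).subtype
      (socle' ((Subgroup.centralizer (Fitting G : Set G) ⊔ Fitting G).map
          (QuotientGroup.mk' (Fitting G)))))

/-- A group is supersoluble if it has a normal series all of whose terms are
normal in the whole group and all of whose factors are cyclic; the factor
`s (i+1) / s i` being cyclic is expressed by `s (i+1) ≤ s i ⊔ ⟨g⟩` for some `g`. -/
def IsSupersoluble (G : Type*) [Group G] : Prop :=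
  ∃ (n : ℕ) (s : Fin (n + 1) → Subgroup G),
    Monotone s ∧ s 0 = ⊥ ∧ s (Fin.last n) = ⊤ ∧ (∀ i, (s i).Normal) ∧
    ∀ i : Fin n, ∃ g : G, s i.succ ≤ s i.castSucc ⊔ Subgroup.zpowers g

/-- A group is metanilpotent if it has a normal nilpotent subgroup with
nilpotent quotient. -/
def IsMetanilpotent (G : Type*) [Group G] : Prop :=
  ∃ (N : Subgroup G) (hN : N.Normal),
    Group.IsNilpotent N ∧
      @Group.IsNilpotent (G ⧸ N) (@QuotientGroup.Quotient.group G _ N hN)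

/-!
Nilpotent groups satisfy both conditions trivially: their maximal subgroups are normal, and the
Sylow subgroups of a nilpotent group, as well as their normalizers, are characteristic, so every
subgroup in question is normal.

Conversely, either condition forces `F*(G)` to normalize every Sylow subgroup `P`: otherwise pick
a maximal `M ≥ N_G(P)`; then `H = P`, resp. `H = N_G(P)`, permutes with `H^x` for `x ∈ F*(G)`,
and comparing the Sylow subgroups `P` and `P^x` of the group `H^x H` gives `x ∈ N_G(P)`. A normal
subgroup normalizing all Sylow subgroups is nilpotent, so `F*(G) = F(G)`, whence
`C_G(F(G)) ≤ F(G)`. Then `G / C_G(F(G))` embeds into the product of the `q`-groups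
`G / C_G(O_q(F(G)))`, and the Frattini argument shows that every Sylow subgroup of `G` is normal.
-/

open Subgroup

section ConjPermutable

variable {G : Type*} [Group G]

lemma coe_sup_eq_mul_of_mul_comm {H K : Subgroup G} (h : (H : Set G) * K = K * H) :
    ((H ⊔ K : Subgroup G) : Set G) = H * K := by
  let J : Subgroup G :=
    { carrier := H * K
      one_mem' := ⟨1, H.one_mem, 1, K.one_mem, one_mul 1⟩
      mul_mem' := fun {a b} ha hb => by
        have hab := Set.mul_mem_mul ha hb
        rwa [mul_assoc, ← mul_assoc (K : Set G), ← h, mul_assoc, ← mul_assoc, coe_mul_coe,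
          coe_mul_coe] at hab
      inv_mem' := fun {a} ha => by
        have hinv := Set.inv_mem_inv.mpr ha
        rwa [mul_inv_rev, inv_coe_set, inv_coe_set, ← h] at hinv }
  refine le_antisymm (?_ : H ⊔ K ≤ J) ?_
  · exact sup_le (fun x hx => ⟨x, hx, 1, K.one_mem, mul_one x⟩)
      (fun x hx => ⟨1, H.one_mem, x, hx, one_mul x⟩)
  · rintro _ ⟨a, ha, b, hb, rfl⟩
    exact mul_mem_sup ha hb

lemma conjS_mono {x : G} {H K : Subgroup G} (h : H ≤ K) : conjS x H ≤ conjS x K :=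
  map_mono h

lemma isRCP_of_normal {R : Set G} {H : Subgroup G} (hH : H.Normal) : IsRCP R H :=
  fun x _ => by rw [conjS, map_conj_eq_self hH]

lemma normal_map_subtype_of_isCoatom [Finite G] [hG : Group.IsNilpotent G] {M : Subgroup G}
    (hM : IsCoatom M) (K : Subgroup M) [K.Characteristic] : (K.map M.subtype).Normal := by
  have hmax := (Group.isNilpotent_of_finite_tfae (G := G)).out 0 2 |>.mp hG
  have : M.Normal := hmax M hM
  infer_instance

variable [Finite G] {p : ℕ}

/-- `P` and `P^x` are Sylow subgroups of the group `H^x H`, hence `P^x = P^(b a)` with `b ∈ H^x`,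
`a ∈ H`; since `a` normalizes `P` and `b` normalizes `P^x`, this forces `P = P^x`. -/
theorem Sylow.mem_normalizer_of_mul_conjS_comm [Fact p.Prime] {P : Sylow p G} {H : Subgroup G}
    (hPH : ↑P ≤ H) (hHN : H ≤ normalizer (P : Set G)) {x : G}
    (hx : (H : Set G) * conjS x H = conjS x H * H) : x ∈ normalizer (P : Set G) := by
  set J := conjS x H ⊔ H
  have hPJ : ↑P ≤ J := hPH.trans le_sup_right
  have hPxJ : ↑(x⁻¹ • P) ≤ J := (conjS_mono hPH).trans le_sup_left
  obtain ⟨k, hk⟩ := MulAction.exists_smul_eq J (P.subtype hPJ) ((x⁻¹ • P).subtype hPxJ)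
  rw [Sylow.smul_subtype hPJ] at hk
  have hkP : (k : G) • P = x⁻¹ • P := Sylow.subtype_injective hk
  obtain ⟨b, ⟨c, hc, rfl⟩, a, ha, hba⟩ : (k : G) ∈ (conjS x H : Set G) * H := by
    rw [← coe_sup_eq_mul_of_mul_comm hx.symm]
    exact k.2
  rw [← hba, mul_smul, Sylow.smul_eq_iff_mem_normalizer.mpr (hHN ha)] at hkP
  rw [MulEquiv.coe_toMonoidHom, MulAut.conj_apply, inv_inv, mul_smul, mul_smul,
    smul_left_cancel_iff, smul_eq_iff_eq_inv_smul] at hkP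
  rw [← Sylow.smul_eq_iff_mem_normalizer, hkP, inv_smul_eq_iff,
    Sylow.smul_eq_iff_mem_normalizer.mpr (hHN hc)]

lemma Sylow.subset_normalizer_of_forall_coatom {R : Set G} (P : Sylow p G)
    (h : ∀ M : Subgroup G, IsCoatom M → normalizer (P : Set G) ≤ M → R ⊆ normalizer (P : Set G)) :
    R ⊆ normalizer (P : Set G) := by
  rcases eq_top_or_exists_le_coatom (normalizer (P : Set G)) with htop | ⟨M, hM, hNM⟩
  · simp [htop]
  · exact h M hM hNM

theorem Sylow.subset_normalizer_of_isRCP_sylow_of_maximal [Fact p.Prime] {R : Set G}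
    (h : ∀ M : Subgroup G, IsCoatom M → ∀ (p : ℕ), p.Prime → ∀ P : Sylow p ↥M,
      IsRCP R (map M.subtype (P : Subgroup ↥M)))
    (P : Sylow p G) : R ⊆ normalizer (P : Set G) :=
  P.subset_normalizer_of_forall_coatom fun M hM hNM x hx => by
    have hPM : ↑P ≤ M := le_normalizer.trans hNM
    have hRCP := h M hM p Fact.out (P.subtype hPM)
    rw [Sylow.coe_subtype, subgroupOf_map_subtype, inf_of_le_left hPM] at hRCP
    exact P.mem_normalizer_of_mul_conjS_comm le_rfl le_normalizer (hRCP x hx)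

theorem Sylow.subset_normalizer_of_isRCP_normalizer_of_maximal [Fact p.Prime] {R : Set G}
    (h : ∀ M : Subgroup G, IsCoatom M → ∀ (p : ℕ), p.Prime → ∀ P : Sylow p ↥M,
      IsRCP R (map M.subtype (normalizer ((P : Subgroup ↥M) : Set ↥M))))
    (P : Sylow p G) : R ⊆ normalizer (P : Set G) :=
  P.subset_normalizer_of_forall_coatom fun M hM hNM x hx => by
    have hPM : ↑P ≤ M := le_normalizer.trans hNM
    have hRCP := h M hM p Fact.out (P.subtype hPM)
    rw [Sylow.coe_subtype, ← subgroupOf_normalizer_eq hPM, subgroupOf_map_subtype,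
      P.coe_coe, inf_of_le_left hNM] at hRCP
    exact P.mem_normalizer_of_mul_conjS_comm le_normalizer le_rfl (hRCP x hx)

end ConjPermutable

section SylowNormalizers

variable {G : Type*} [Group G]

lemma IsPGroup.le_sylow_of_le_normalizer {p : ℕ} {H : Subgroup G} (hH : IsPGroup p H)
    {Q : Sylow p G} (hHQ : H ≤ normalizer (Q : Set G)) : H ≤ Q := by
  rw [← inf_eq_left, ← hH.inf_normalizer_sylow Q, inf_eq_left]
  exact hHQ

theorem isNilpotent_of_le_normalizer_sylow [Finite G] {N : Subgroup G}
    (hN : ∀ p, p.Prime → ∀ P : Sylow p G, N ≤ normalizer (P : Set G)) : Group.IsNilpotent N := by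
  refine (Group.isNilpotent_of_finite_tfae.out 3 0).mp fun p hp S => ?_
  obtain ⟨Q, hSQ⟩ := (S.2.map N.subtype).exists_le_sylow
  have hS : (S : Subgroup N) = (Q : Subgroup G).subgroupOf N :=
    (S.3 Q.2.comap_subtype fun s hs => hSQ (mem_map_of_mem _ hs)).symm
  rw [hS]
  exact normal_subgroupOf_of_le_normalizer (hN p hp.out Q)

def sylowNormalizersInf (G : Type*) [Group G] : Subgroup G :=
  ⨅ (p : ℕ) (_ : p.Prime) (P : Sylow p G), normalizer (P : Set G)

lemma le_sylowNormalizersInf_iff {H : Subgroup G} :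
    H ≤ sylowNormalizersInf G ↔ ∀ p, p.Prime → ∀ P : Sylow p G, H ≤ normalizer (P : Set G) := by
  simp only [sylowNormalizersInf, le_iInf_iff]

instance sylowNormalizersInf_normal : (sylowNormalizersInf G).Normal where
  conj_mem n hn g := by
    simp only [sylowNormalizersInf, mem_iInf] at hn ⊢
    intro p hp P
    have hn' := hn p hp (g⁻¹ • P)
    rw [← Sylow.smul_eq_iff_mem_normalizer] at hn' ⊢
    rw [mul_smul, mul_smul, hn', smul_inv_smul]

theorem sylowNormalizersInf_le_Fitting [Finite G] : sylowNormalizersInf G ≤ Fitting G :=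
  le_sSup ⟨inferInstance, isNilpotent_of_le_normalizer_sylow (le_sylowNormalizersInf_iff.mp le_rfl)⟩

lemma Sylow.normal_inf_of_le_normalizer {p : ℕ} {N : Subgroup G} [N.Normal]
    (hN : ∀ P : Sylow p G, N ≤ normalizer (P : Set G)) (Q : Sylow p G) : (N ⊓ Q).Normal where
  conj_mem n hn g := by
    refine ⟨Normal.conj_mem inferInstance n hn.1 g, ?_⟩
    have hQ : IsPGroup p ↥(N ⊓ ↑(g • Q)) := (g • Q).2.to_inf_right
    exact hQ.le_sylow_of_le_normalizer (inf_le_left.trans (hN Q))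
      ⟨Normal.conj_mem inferInstance n hn.1 g, smul_mem_pointwise_smul n (MulAut.conj g) _ hn.2⟩

lemma Sylow.le_centralizer_of_le_normalizer {r q : ℕ} [Fact r.Prime] [Fact q.Prime] (hrq : r ≠ q)
    (R : Sylow r G) {K : Subgroup G} [K.Normal] (hK : IsPGroup q K)
    (hKR : K ≤ normalizer (R : Set G)) : ↑R ≤ centralizer (K : Set G) := by
  rw [← commutator_eq_bot_iff_le_centralizer, eq_bot_iff,
    ← disjoint_iff.mp (IsPGroup.disjoint_of_ne r q hrq _ _ R.2 hK)]
  refine le_inf (commutator_le.mpr fun g hg k hk => ?_) (commutator_le_right _ _)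
  have hconj : k * g⁻¹ * k⁻¹ ∈ R := (mem_normalizer_iff.mp (hKR hk) g⁻¹).mp (inv_mem hg)
  rw [commutatorElement_def, mul_assoc g k, mul_assoc g]
  exact mul_mem hg hconj

variable [Finite G]

lemma Sylow.not_dvd_index_of_le {p : ℕ} [Fact p.Prime] (P : Sylow p G) {H : Subgroup G}
    (hPH : ↑P ≤ H) : ¬ p ∣ H.index :=
  fun hp => P.not_dvd_index (hp.trans (index_dvd_of_le hPH))

lemma eq_top_of_forall_sylow_le {H : Subgroup G}
    (h : ∀ p ∈ (Nat.card G).primeFactors, ∃ P : Sylow p G, ↑P ≤ H) : H = ⊤ := by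
  refine index_eq_one.mp (Nat.eq_one_iff_not_exists_prime_dvd.mpr fun p hp hpH => ?_)
  have := Fact.mk hp
  obtain ⟨P, hPH⟩ :=
    h p (Nat.mem_primeFactors.mpr ⟨hp, hpH.trans H.index_dvd_card, Nat.card_pos.ne'⟩)
  exact P.not_dvd_index_of_le hPH hpH

lemma isPGroup_quotient_of_forall_sylow_le {q : ℕ} [Fact q.Prime] {H : Subgroup G} [H.Normal]
    (h : ∀ r, r.Prime → r ≠ q → ∃ R : Sylow r G, ↑R ≤ H) : IsPGroup q (G ⧸ H) := by
  refine IsPGroup.of_card (Nat.eq_prime_pow_of_unique_prime_dvd H.index_ne_zero_of_finite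
    fun {r} hr hrH => ?_)
  by_contra hrq
  have := Fact.mk hr
  obtain ⟨R, hRH⟩ := h r hr hrq
  exact R.not_dvd_index_of_le hRH hrH

lemma le_of_forall_inf_sylow_le {N K : Subgroup G}
    (hN : ∀ p, p.Prime → ∀ P : Sylow p G, N ≤ normalizer (P : Set G))
    (hK : ∀ q ∈ (Nat.card N).primeFactors, ∃ Q : Sylow q G, N ⊓ Q ≤ K) : N ≤ K := by
  rw [← subgroupOf_eq_top]
  refine eq_top_of_forall_sylow_le fun q hq => ?_
  have := Fact.mk (Nat.prime_of_mem_primeFactors hq)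
  obtain ⟨Q, hQ⟩ := hK q hq
  let S : Sylow q N := default
  refine ⟨S, fun s hs => hQ ⟨s.2, ?_⟩⟩
  exact (S.2.map N.subtype).le_sylow_of_le_normalizer ((map_subtype_le _).trans (hN q Fact.out Q))
    (mem_map_of_mem _ hs)

/-- Frattini argument: `P ⊔ ker f` is normal, its image being a Sylow subgroup of the nilpotent
group `f.range`. -/
theorem Sylow.normal_of_ker_le_normalizer {H : Type*} [Group H] [Group.IsNilpotent H]
    {p : ℕ} [Fact p.Prime] (f : G →* H) (P : Sylow p G) (hf : f.ker ≤ normalizer (P : Set G)) :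
    (P : Subgroup G).Normal := by
  have hPK : ((P : Subgroup G) ⊔ f.ker).Normal := by
    rw [← f.ker_rangeRestrict, ← comap_map_eq]
    have : Finite f.range := Finite.of_surjective _ f.rangeRestrict_surjective
    have hPf : (P.mapSurjective f.rangeRestrict_surjective : Subgroup f.range).Normal :=
      inferInstance
    exact hPf.comap _
  have hframe := Sylow.normalizer_sup_eq_top' P (le_sup_left : ↑P ≤ (P : Subgroup G) ⊔ f.ker)
  rw [sup_of_le_left (sup_le le_normalizer hf : _ ≤ normalizer (P : Set G))] at hframe
  exact normalizer_eq_top_iff.mp hframe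

/-- For a Sylow `q`-subgroup `Q`, the Sylow subgroups for the other primes centralize
`O_q = N ⊓ Q`, so `G ⧸ C_G(O_q)` is a `q`-group; the `O_q` generate `N`, so the kernel of
`G → ∏_q G ⧸ C_G(O_q)` lies in `C_G(N) ≤ N`. -/
theorem isNilpotent_of_centralizer_le_of_le_sylowNormalizersInf {N : Subgroup G} [N.Normal]
    (hC : centralizer (N : Set G) ≤ N) (hN : N ≤ sylowNormalizersInf G) : Group.IsNilpotent G := by
  rw [le_sylowNormalizersInf_iff] at hN
  let η := (Nat.card N).primeFactors
  have hη (q : η) : Fact (q : ℕ).Prime := ⟨Nat.prime_of_mem_primeFactors q.2⟩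
  let O (q : η) : Subgroup G := N ⊓ (default : Sylow q G)
  have hO (q : η) : (O q).Normal := Sylow.normal_inf_of_le_normalizer (hN q Fact.out) _
  have hquot (q : η) : Group.IsNilpotent (G ⧸ centralizer (O q : Set G)) :=
    IsPGroup.isNilpotent <| isPGroup_quotient_of_forall_sylow_le fun r hr hrq =>
      have := Fact.mk hr
      ⟨default, Sylow.le_centralizer_of_le_normalizer hrq _ (default : Sylow q G).2.to_inf_right
        (inf_le_left.trans (hN r hr _))⟩
  let φ : G →* ∀ q : η, G ⧸ centralizer (O q : Set G) :=
    MonoidHom.pi fun q => QuotientGroup.mk' _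
  have hker : φ.ker ≤ centralizer (N : Set G) := by
    rw [le_centralizer_iff]
    refine le_of_forall_inf_sylow_le hN fun q hq => ⟨default, ?_⟩
    rw [← le_centralizer_iff]
    intro x hx
    have hxq : QuotientGroup.mk' _ x = 1 := congr_fun (MonoidHom.mem_ker.mp hx) ⟨q, hq⟩
    rwa [QuotientGroup.mk'_apply, QuotientGroup.eq_one_iff] at hxq
  exact (Group.isNilpotent_of_finite_tfae.out 3 0).mp fun p (hp : Fact p.Prime) P =>
    Sylow.normal_of_ker_le_normalizer φ P (hker.trans (hC.trans (hN p hp.out P)))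

end SylowNormalizers

section GeneralizedFitting

variable {G : Type*} [Group G]

lemma exists_isMinimalNormal [Finite G] [Nontrivial G] : ∃ N : Subgroup G, IsMinimalNormal N := by
  obtain ⟨N, -, hN⟩ := exists_minimal_le_of_wellFoundedLT (fun N : Subgroup G => N.Normal ∧ N ≠ ⊥)
    ⊤ ⟨inferInstance, top_ne_bot⟩
  refine ⟨N, hN.1.1, hN.1.2, fun K hKn hKN => or_iff_not_imp_left.mpr fun hK => ?_⟩
  exact le_antisymm hKN (hN.2 ⟨hKn, hK⟩ hKN)

lemma socle'_ne_bot [Finite G] [Nontrivial G] : socle' G ≠ ⊥ := by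
  obtain ⟨N, hN⟩ := exists_isMinimalNormal (G := G)
  exact ne_bot_of_le_ne_bot hN.2.1 (le_sSup hN)

lemma Fitting_le_FStar : Fitting G ≤ FStar G := fun x hx => by
  rw [← QuotientGroup.ker_mk' (Fitting G)] at hx
  rw [FStar, mem_comap, MonoidHom.mem_ker.mp hx]
  exact one_mem _

theorem centralizer_Fitting_le_of_FStar_le [Finite G] (h : FStar G ≤ Fitting G) :
    centralizer (Fitting G : Set G) ≤ Fitting G := by
  set S := (centralizer (Fitting G : Set G) ⊔ Fitting G).map (QuotientGroup.mk' (Fitting G))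
  have hS : socle' S = ⊥ := by
    have hmap := map_mono (f := QuotientGroup.mk' (Fitting G)) h
    rwa [FStar, map_comap_eq_self_of_surjective (QuotientGroup.mk'_surjective _),
      QuotientGroup.map_mk'_self, le_bot_iff,
      map_eq_bot_iff_of_injective _ S.subtype_injective] at hmap
  have hS' : S = ⊥ := by
    by_contra hne
    have := (nontrivial_iff_ne_bot S).mpr hne
    exact socle'_ne_bot hS
  rw [Subgroup.map_eq_bot_iff, QuotientGroup.ker_mk'] at hS'
  exact le_sup_left.trans hS'

theorem isNilpotent_of_FStar_le_sylowNormalizersInf [Finite G]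
    (h : FStar G ≤ sylowNormalizersInf G) : Group.IsNilpotent G :=
  isNilpotent_of_centralizer_le_of_le_sylowNormalizersInf
    (centralizer_Fitting_le_of_FStar_le (h.trans sylowNormalizersInf_le_Fitting))
    (Fitting_le_FStar.trans h)

end GeneralizedFitting

theorem nilpotent_iff_sylow_of_maximal_fstar_conjugate_permutable
    (G : Type*) [Group G] [Finite G] :
    (Group.IsNilpotent G ↔
        ∀ M : Subgroup G, IsCoatom M → ∀ (p : ℕ), p.Prime → ∀ P : Sylow p ↥M,
          IsRCP (FStar G : Set G) (Subgroup.map M.subtype (P : Subgroup ↥M))) ∧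
    (Group.IsNilpotent G ↔
        ∀ M : Subgroup G, IsCoatom M → ∀ (p : ℕ), p.Prime → ∀ P : Sylow p ↥M,
          IsRCP (FStar G : Set G)
            (Subgroup.map M.subtype (Subgroup.normalizer ((P : Subgroup ↥M) : Set ↥M)))) := by
  refine ⟨⟨fun _ M hM p hp P => ?_, fun h => ?_⟩, ⟨fun _ M hM p hp P => ?_, fun h => ?_⟩⟩
  · have := Fact.mk hp
    have := Sylow.characteristic_of_normal P inferInstance
    exact isRCP_of_normal (normal_map_subtype_of_isCoatom hM _)
  · refine isNilpotent_of_FStar_le_sylowNormalizersInf (le_sylowNormalizersInf_iff.mpr ?_)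
    intro p hp P
    have := Fact.mk hp
    exact P.subset_normalizer_of_isRCP_sylow_of_maximal h
  · have := Fact.mk hp
    rw [normalizer_eq_top_iff.mpr inferInstance]
    exact isRCP_of_normal (normal_map_subtype_of_isCoatom hM _)
  · refine isNilpotent_of_FStar_le_sylowNormalizersInf (le_sylowNormalizersInf_iff.mpr ?_)
    intro p hp P
    have := Fact.mk hp
    exact P.subset_normalizer_of_isRCP_normalizer_of_maximal h
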